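/- Let R > 0 and let u be a C² convex solution of the translating soliton equation on the strip S_R := {(x₁,x₂) ∈ ℝ² : |x₁| < R} such that, for each fixed x₂, u(x₁, x₂) → +∞ as |x₁| → R. Then the mean curvature of the graph satisfies H(x₁,x₂) := 1/√(1 + |∇u(x₁,x₂)|²) ≤ R − |x₁| for every (x₁,x₂) ∈ S_R. -/

import Mathlib

open Real Filter

noncomputable def pd1 (f : ℝ × ℝ → ℝ) (p : ℝ × ℝ) : ℝ := fderiv ℝ f p (1, 0)

noncomputable def pd2 (f : ℝ × ℝ → ℝ) (p : ℝ × ℝ) : ℝ := fderiv ℝ f p (0, 1)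

/-- The translating soliton equation in nondivergence form. -/
def IsSolitonAt (u : ℝ × ℝ → ℝ) (p : ℝ × ℝ) : Prop :=
  (1 + (pd2 u p) ^ 2) * pd1 (pd1 u) p
    - 2 * pd1 u p * pd2 u p * pd2 (pd1 u) p
    + (1 + (pd1 u p) ^ 2) * pd2 (pd2 u) p
  = 1 + (pd1 u p) ^ 2 + (pd2 u p) ^ 2

/-! Along the line `x₂ = b` put `θ := arctan u₁`. Convexity makes the Hessian nonnegative
in the direction `(u₁u₂, -(1 + u₁²))`; combined with the soliton equation this leaves
`u₁₁ ≤ 1 + u₁²`, i.e. `θ' ≤ 1`. Since `u(·, b)` blows up at `±R`, its slope cannot stay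
bounded near the boundary, so `θ` must reach `±π/2` there, whence
`π/2 - |θ(x₁)| ≤ R - |x₁|`. Finally `H ≤ 1/√(1 + u₁²) = cos θ = sin (π/2 - |θ|) ≤ π/2 - |θ|`. -/

open Set Topology

section OneVariable

variable {f g g' : ℝ → ℝ} {α β : ℝ}

theorem antitoneOn_arctan_sub_id (hg : ∀ x ∈ Ioo α β, HasDerivAt g (g' x) x)
    (hg' : ∀ x ∈ Ioo α β, g' x ≤ 1 + g x ^ 2) :
    AntitoneOn (fun x => arctan (g x) - x) (Ioo α β) := by
  have hd : ∀ x ∈ Ioo α β,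
      HasDerivAt (fun x => arctan (g x) - x) (1 / (1 + g x ^ 2) * g' x - 1) x :=
    fun x hx => (hg x hx).arctan.sub (hasDerivAt_id x)
  refine antitoneOn_of_deriv_nonpos (convex_Ioo α β)
    (fun x hx => (hd x hx).continuousAt.continuousWithinAt) ?_ ?_ <;> rw [interior_Ioo]
  · exact fun x hx => (hd x hx).differentiableAt.differentiableWithinAt
  · intro x hx
    rw [(hd x hx).deriv, sub_nonpos, one_div_mul_eq_div, div_le_one (by positivity)]
    exact hg' x hx

theorem pi_div_two_sub_arctan_le (hf : ∀ x ∈ Ioo α β, HasDerivAt f (g x) x)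
    (hg : ∀ x ∈ Ioo α β, HasDerivAt g (g' x) x) (hg' : ∀ x ∈ Ioo α β, g' x ≤ 1 + g x ^ 2)
    (hf_top : Tendsto f (𝓝[<] β) atTop) {a : ℝ} (ha : a ∈ Ioo α β) :
    π / 2 - arctan (g a) ≤ β - a := by
  -- otherwise `arctan ∘ g` stays below `K < π / 2` on `(a, β)`, so `f` has bounded slope there
  by_contra! h
  set K := arctan (g a) + (β - a)
  have hslope : ∀ x ∈ Ioo a β, g x ≤ tan K := by
    intro x hx
    have hmono := antitoneOn_arctan_sub_id hg hg' ha ⟨ha.1.trans hx.1, hx.2⟩ hx.1.le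
    rw [← arctan_le_arctan_iff, arctan_tan (by linarith [neg_pi_div_two_lt_arctan (g a), ha.2])
      (by linarith)]
    linarith [hx.2]
  have hIco : Ico a β ⊆ Ioo α β := fun x hx => ⟨ha.1.trans_le hx.1, hx.2⟩
  have hbound : ∀ x ∈ Ico a β, f x - f a ≤ tan K * (x - a) := by
    refine fun x hx => (convex_Ico a β).image_sub_le_mul_sub_of_deriv_le
      (fun y hy => (hf y (hIco hy)).continuousAt.continuousWithinAt) ?_ ?_ a ⟨le_rfl, ha.2⟩
      x hx hx.1 <;> rw [interior_Ico]
    · exact fun y hy =>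
        (hf y (hIco (Ioo_subset_Ico_self hy))).differentiableAt.differentiableWithinAt
    · exact fun y hy => (hf y (hIco (Ioo_subset_Ico_self hy))).deriv ▸ hslope y hy
  obtain ⟨x, hfx, hx⟩ :=
    ((hf_top.eventually (eventually_gt_atTop (f a + |tan K| * (β - a)))).and
      (Ioo_mem_nhdsLT ha.2)).exists
  have : tan K * (x - a) ≤ |tan K| * (β - a) := by
    calc tan K * (x - a) ≤ |tan K| * (x - a) := by gcongr; linarith [hx.1]; exact le_abs_self _
      _ ≤ |tan K| * (β - a) := by gcongr; exact hx.2.le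
  linarith [hbound x (Ioo_subset_Ico_self hx)]

theorem pi_div_two_add_arctan_le (hf : ∀ x ∈ Ioo α β, HasDerivAt f (g x) x)
    (hg : ∀ x ∈ Ioo α β, HasDerivAt g (g' x) x) (hg' : ∀ x ∈ Ioo α β, g' x ≤ 1 + g x ^ 2)
    (hf_top : Tendsto f (𝓝[>] α) atTop) {a : ℝ} (ha : a ∈ Ioo α β) :
    π / 2 + arctan (g a) ≤ a - α := by
  have hneg : ∀ {x}, x ∈ Ioo (-β) (-α) → -x ∈ Ioo α β := neg_mem_Ioo_iff.2
  have := pi_div_two_sub_arctan_le (f := fun x => f (-x)) (g := fun x => -g (-x))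
    (g' := fun x => g' (-x)) (α := -β) (β := -α)
    (fun x hx => by
      simpa [Function.comp_def] using (hf (-x) (hneg hx)).comp x (hasDerivAt_neg x))
    (fun x hx => by simpa using ((hg (-x) (hneg hx)).comp x (hasDerivAt_neg x)).fun_neg)
    (fun x hx => by simpa using hg' (-x) (hneg hx))
    (hf_top.comp (by simpa using tendsto_neg_nhdsLT (a := -α)))
    (a := -a) (neg_mem_Ioo_iff.2 (by rwa [neg_neg, neg_neg]))
  simpa [arctan_neg, sub_eq_add_neg, add_comm] using this

end OneVariable

theorem one_div_sqrt_le_pi_div_two_sub_abs_arctan (y z : ℝ) :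
    1 / √(1 + y ^ 2 + z ^ 2) ≤ π / 2 - |arctan y| :=
  calc 1 / √(1 + y ^ 2 + z ^ 2) ≤ 1 / √(1 + y ^ 2) :=
        one_div_le_one_div_of_le (by positivity) (sqrt_le_sqrt (by nlinarith))
    _ = sin (π / 2 - |arctan y|) := by rw [sin_pi_div_two_sub, cos_abs, cos_arctan]
    _ ≤ π / 2 - |arctan y| := sin_le (sub_nonneg.2 (abs_le.2
        ⟨(neg_pi_div_two_lt_arctan y).le, (arctan_lt_pi_div_two y).le⟩))

section Hessian

variable {E : Type*} [NormedAddCommGroup E] [NormedSpace ℝ E]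

theorem ContDiffAt.differentiableAt_fderiv {F : Type*} [NormedAddCommGroup F]
    [NormedSpace ℝ F] {f : E → F} {q : E} (hf : ContDiffAt ℝ 2 f q) :
    DifferentiableAt ℝ (fderiv ℝ f) q :=
  (hf.fderiv_right (by norm_num)).differentiableAt one_ne_zero

theorem fderiv_apply_fderiv_eq {f : E → ℝ} {q : E} (hf : DifferentiableAt ℝ (fderiv ℝ f) q)
    (v w : E) : fderiv ℝ (fun p => fderiv ℝ f p w) q v = fderiv ℝ (fderiv ℝ f) q v w := by
  rw [(hf.hasFDerivAt.clm_apply (hasFDerivAt_const w q)).fderiv]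
  simp

theorem ConvexOn.fderiv_fderiv_apply_self_nonneg {Ω : Set E} {u : E → ℝ}
    (hconv : ConvexOn ℝ Ω u) (hΩ : IsOpen Ω) (hu : DifferentiableOn ℝ u Ω) {q : E}
    (hq : q ∈ Ω) (hu2 : DifferentiableAt ℝ (fderiv ℝ u) q) (v : E) :
    0 ≤ fderiv ℝ (fderiv ℝ u) q v v := by
  set ℓ : ℝ →ᵃ[ℝ] E := AffineMap.lineMap q (q + v)
  have hℓ : ∀ t, HasDerivAt ℓ v t := fun t => by
    simpa using AffineMap.hasDerivAt_lineMap (a := q) (b := q + v) (x := t)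
  have hℓ0 : ℓ 0 = q := AffineMap.lineMap_apply_zero _ _
  set T := ℓ ⁻¹' Ω
  have hT : T ∈ 𝓝 0 :=
    (hΩ.preimage ℓ.continuous_of_finiteDimensional).mem_nhds (show ℓ 0 ∈ Ω by rwa [hℓ0])
  have hφ : ∀ t ∈ T, HasDerivAt (u ∘ ℓ) (fderiv ℝ u (ℓ t) v) t := fun t ht =>
    ((hu _ ht).differentiableAt (hΩ.mem_nhds ht)).hasFDerivAt.comp_hasDerivAt t (hℓ t)
  have hmono : MonotoneOn (fun t => fderiv ℝ u (ℓ t) v) T :=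
    ((hconv.comp_affineMap ℓ).monotoneOn_deriv fun t ht => (hφ t ht).differentiableAt).congr
      fun t ht => (hφ t ht).deriv
  have hψ : HasDerivAt (fun t => fderiv ℝ u (ℓ t) v) (fderiv ℝ (fderiv ℝ u) q v v) 0 := by
    have := (hu2.hasFDerivAt.clm_apply (hasFDerivAt_const v q)).comp_hasDerivAt_of_eq 0 (hℓ 0)
      hℓ0.symm
    simp only [ContinuousLinearMap.flip_apply, ContinuousLinearMap.comp_zero,
      zero_add] at this
    exact this
  have hacc : AccPt 0 (𝓟 T) := by
    simpa using (PerfectSpace.univ_preperfect (0 : ℝ) trivial).nhds_inter hT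
  exact hψ.hasDerivWithinAt.nonneg_of_monotoneOn hacc hmono

end Hessian

theorem DifferentiableAt.hasDerivAt_pd1 {f : ℝ × ℝ → ℝ} {x b : ℝ}
    (hf : DifferentiableAt ℝ f (x, b)) : HasDerivAt (fun t => f (t, b)) (pd1 f (x, b)) x :=
  hf.hasFDerivAt.comp_hasDerivAt x ((hasDerivAt_id x).prodMk (hasDerivAt_const x b))

theorem ContDiffAt.differentiableAt_pd1 {f : ℝ × ℝ → ℝ} {q : ℝ × ℝ}
    (hf : ContDiffAt ℝ 2 f q) : DifferentiableAt ℝ (pd1 f) q :=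
  hf.differentiableAt_fderiv.clm_apply (differentiableAt_const _)

theorem IsSolitonAt.pd1_pd1_le {u : ℝ × ℝ → ℝ} {q : ℝ × ℝ} (hsol : IsSolitonAt u q)
    (hu : ContDiffAt ℝ 2 u q) (hpsd : ∀ v, 0 ≤ fderiv ℝ (fderiv ℝ u) q v v) :
    pd1 (pd1 u) q ≤ 1 + pd1 u q ^ 2 := by
  set B := fderiv ℝ (fderiv ℝ u) q
  have hB : ∀ v w, fderiv ℝ (fun p => fderiv ℝ u p w) q v = B v w :=
    fderiv_apply_fderiv_eq hu.differentiableAt_fderiv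
  have hsymm : B (0, 1) (1, 0) = B (1, 0) (0, 1) := hu.isSymmSndFDerivAt (by simp) _ _
  have h₁₁ : pd1 (pd1 u) q = B (1, 0) (1, 0) := hB _ _
  have h₁₂ : pd2 (pd1 u) q = B (1, 0) (0, 1) := (hB _ _).trans hsymm
  have h₂₂ : pd2 (pd2 u) q = B (0, 1) (0, 1) := hB _ _
  rw [IsSolitonAt, h₁₁, h₁₂, h₂₂] at hsol
  rw [h₁₁]
  set a₁ := pd1 u q
  set a₂ := pd2 u q
  have hQ : 0 ≤ (a₁ * a₂) ^ 2 * B (1, 0) (1, 0)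
      - 2 * (a₁ * a₂) * (1 + a₁ ^ 2) * B (1, 0) (0, 1) + (1 + a₁ ^ 2) ^ 2 * B (0, 1) (0, 1) := by
    have hv : ((a₁ * a₂, -(1 + a₁ ^ 2)) : ℝ × ℝ)
        = (a₁ * a₂) • (1, 0) - (1 + a₁ ^ 2) • (0, 1) := by
      simp
    have := hpsd (a₁ * a₂, -(1 + a₁ ^ 2))
    rw [hv] at this
    simp only [map_sub, map_smul, sub_apply, FunLike.coe_smul,
      Pi.smul_apply, smul_eq_mul, hsymm] at this
    linear_combination this
  -- (1 + u₁²) · (soliton equation) - (Hessian at `(u₁u₂, -(1 + u₁²))`) is `W² u₁₁ ≤ W² (1 + u₁²)`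
  have hW : 0 < 1 + a₁ ^ 2 + a₂ ^ 2 := by positivity
  have : (1 + a₁ ^ 2 + a₂ ^ 2) * (B (1, 0) (1, 0) - (1 + a₁ ^ 2)) ≤ 0 := by
    linear_combination (1 + a₁ ^ 2) * hsol + hQ
  exact sub_nonpos.1 (nonpos_of_mul_nonpos_right this hW)

theorem meanCurvature_le_dist_to_boundary (R : ℝ) (u : ℝ × ℝ → ℝ)
    (hu : ContDiffOn ℝ 2 u {p : ℝ × ℝ | |p.1| < R})
    (hconv : ConvexOn ℝ {p : ℝ × ℝ | |p.1| < R} u)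
    (hsol : ∀ p : ℝ × ℝ, |p.1| < R → IsSolitonAt u p)
    (hcompl₁ : ∀ x₂ : ℝ,
      Tendsto (fun x₁ : ℝ => u (x₁, x₂)) (nhdsWithin R (Set.Iio R)) atTop)
    (hcompl₂ : ∀ x₂ : ℝ,
      Tendsto (fun x₁ : ℝ => u (x₁, x₂)) (nhdsWithin (-R) (Set.Ioi (-R))) atTop) :
    ∀ p : ℝ × ℝ, |p.1| < R →
      1 / Real.sqrt (1 + (pd1 u p) ^ 2 + (pd2 u p) ^ 2) ≤ R - |p.1| := by
  rintro ⟨a, b⟩ ha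
  have hstrip : IsOpen {p : ℝ × ℝ | |p.1| < R} := isOpen_lt continuous_fst.abs continuous_const
  have hC2 : ∀ x ∈ Ioo (-R) R, ContDiffAt ℝ 2 u (x, b) := fun x hx =>
    hu.contDiffAt (hstrip.mem_nhds (abs_lt.2 hx))
  have hf : ∀ x ∈ Ioo (-R) R, HasDerivAt (fun t => u (t, b)) (pd1 u (x, b)) x := fun x hx =>
    ((hC2 x hx).differentiableAt two_ne_zero).hasDerivAt_pd1
  have hg : ∀ x ∈ Ioo (-R) R, HasDerivAt (fun t => pd1 u (t, b)) (pd1 (pd1 u) (x, b)) x :=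
    fun x hx => (hC2 x hx).differentiableAt_pd1.hasDerivAt_pd1
  have hg' : ∀ x ∈ Ioo (-R) R, pd1 (pd1 u) (x, b) ≤ 1 + pd1 u (x, b) ^ 2 := fun x hx =>
    (hsol (x, b) (abs_lt.2 hx)).pd1_pd1_le (hC2 x hx) (hconv.fderiv_fderiv_apply_self_nonneg hstrip
      (hu.differentiableOn two_ne_zero) (abs_lt.2 hx) (hC2 x hx).differentiableAt_fderiv)
  have hright := pi_div_two_sub_arctan_le hf hg hg' (hcompl₁ b) (abs_lt.1 ha)
  have hleft := pi_div_two_add_arctan_le hf hg hg' (hcompl₂ b) (abs_lt.1 ha)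
  calc _ ≤ π / 2 - |arctan (pd1 u (a, b))| := one_div_sqrt_le_pi_div_two_sub_abs_arctan _ _
    _ ≤ R - |a| := by cases abs_cases a <;> cases abs_cases (arctan (pd1 u (a, b))) <;> linarith
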